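/- Let 0 ≤ b < d, φ(x) := exp(−x²/2) and m̂ := ∫_b^d φ(x) dx. For λ ≥ max(b², 1), define G(λ) := ∫_0^{1 − bλ^{-1/2}} ∫_b^{min(d, √λ(1−α₁))} φ(z) ( ∫_{−z}^{min(d, √λ α₁)} ( ∫_{max(b,y)}^{min(d, y + √λ(1−α₁))} φ(x) dx ) dy ) dz dα₁, where an inner integral over an interval [u, v] with v < u is taken to be 0. Then lim_{λ → ∞} G(λ) = 2 m̂ ( φ(b) − φ(d) ). -/

import Mathlib

open MeasureTheory Real Filter

/-- `φ(x) = exp(−x²/2)`. -/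
noncomputable def phi (x : ℝ) : ℝ := Real.exp (-(x ^ 2 / 2))

/-- Integral of `f` over the interval `[u, v]`, taken to be `0` when `v < u`. -/
noncomputable def oint (u v : ℝ) (f : ℝ → ℝ) : ℝ := ∫ x in Set.Ioc u v, f x

/-!
Write `s = √λ`. For fixed `α₁ ∈ (0, 1)`, as soon as `s α₁ ≥ d` and `s (1 - α₁) ≥ 2d` none of the
truncations `min d _` in `G` is active, so the integrand in `α₁` no longer depends on `λ`; being
bounded uniformly in `λ`, dominated convergence lets it pass to the limit. The limit is computed
by exchanging the order of integration:
`∫_{-z}^d ∫_{max(b,y)}^d f(x) dx dy = ∫_b^d (x + z) f(x) dx` for `z ≥ -b`, and hence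
`∫_b^d φ(z) ∫_b^d (x + z) φ(x) dx dz = 2 (∫_b^d φ) (∫_b^d x φ(x) dx) = 2 m̂ (φ(b) - φ(d))`.
-/

open Set Topology

section Oint

theorem oint_of_le {u v : ℝ} (h : u ≤ v) (f : ℝ → ℝ) : oint u v f = ∫ x in u..v, f x :=
  (intervalIntegral.integral_of_le h).symm

theorem oint_eq_intervalIntegral_max (u v : ℝ) (f : ℝ → ℝ) :
    oint u v f = ∫ x in u..max u v, f x := by
  rcases le_total u v with h | h
  · rw [max_eq_right h, oint_of_le h]
  · rw [max_eq_left h, intervalIntegral.integral_same, oint, Ioc_eq_empty_of_le h,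
      Measure.restrict_empty, integral_zero_measure]

theorem abs_oint_le {u v C M : ℝ} {f : ℝ → ℝ} (hf : ∀ x ∈ Ioc u v, |f x| ≤ C) (hC : 0 ≤ C)
    (hM : 0 ≤ M) (huv : v - u ≤ M) : |oint u v f| ≤ C * M :=
  calc |oint u v f| ≤ C * volume.real (Ioc u v) :=
        norm_setIntegral_le_of_norm_le_const measure_Ioc_lt_top fun x hx =>
          (Real.norm_eq_abs _).trans_le (hf x hx)
    _ ≤ C * M := by
        rw [Real.volume_real_Ioc]
        exact mul_le_mul_of_nonneg_left (max_le huv hM) hC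

theorem continuous_oint {X : Type*} [TopologicalSpace X] {u v : X → ℝ} {f : X → ℝ → ℝ}
    (hu : Continuous u) (hv : Continuous v) (hf : Continuous (Function.uncurry f)) :
    Continuous fun x => oint (u x) (v x) (f x) := by
  have hint : ∀ x (a b : ℝ), IntervalIntegrable (f x) volume a b := fun x _ _ =>
    (hf.comp (Continuous.prodMk_right x)).intervalIntegrable _ _
  have h : ∀ x, oint (u x) (v x) (f x) =
      (∫ t in 0..max (u x) (v x), f x t) - ∫ t in 0..u x, f x t := fun x => by
    rw [oint_eq_intervalIntegral_max, intervalIntegral.integral_interval_sub_left (hint _ _ _)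
      (hint _ _ _)]
  simp only [h]
  exact (intervalIntegral.continuous_parametric_intervalIntegral_of_continuous hf
    (hu.max hv)).sub (intervalIntegral.continuous_parametric_intervalIntegral_of_continuous hf hu)

theorem tendsto_oint_of_dominated {ι : Type*} {l : Filter ι} [l.IsCountablyGenerated]
    {p q C : ℝ} {T : ι → ℝ} {g : ι → ℝ → ℝ} {G : ℝ → ℝ}
    (hg : ∀ᶠ i in l, AEStronglyMeasurable (g i) (volume.restrict (Ioc p q)))
    (hbound : ∀ᶠ i in l, ∀ a ∈ Ioc p q, |g i a| ≤ C)
    (hT : Tendsto T l (𝓝 q)) (hTq : ∀ᶠ i in l, T i ≤ q)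
    (hlim : ∀ a ∈ Ioo p q, Tendsto (fun i => g i a) l (𝓝 (G a))) :
    Tendsto (fun i => oint p (T i) (g i)) l (𝓝 (oint p q G)) := by
  have hind : ∀ᶠ i in l,
      ∫ a in Ioc p q, (Ioc p (T i)).indicator (g i) a = oint p (T i) (g i) := by
    filter_upwards [hTq] with i hi
    rw [setIntegral_indicator measurableSet_Ioc,
      inter_eq_right.mpr (Ioc_subset_Ioc_right hi), oint]
  refine Tendsto.congr' hind (tendsto_integral_filter_of_dominated_convergence (fun _ => C)
    ?_ ?_ (integrableOn_const measure_Ioc_lt_top.ne) ?_)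
  · filter_upwards [hg] with i hi
    exact hi.indicator measurableSet_Ioc
  · filter_upwards [hbound] with i hi
    filter_upwards [ae_restrict_mem measurableSet_Ioc] with a ha
    rw [Real.norm_eq_abs, indicator_apply]
    split_ifs
    · exact hi a ha
    · simpa using (abs_nonneg _).trans (hi a ha)
  · filter_upwards [ae_restrict_mem measurableSet_Ioc,
      ae_restrict_of_ae (Measure.ae_ne volume q)] with a ha haq
    have ha' : a ∈ Ioo p q := ⟨ha.1, lt_of_le_of_ne ha.2 haq⟩
    refine (hlim a ha').congr' ?_
    filter_upwards [hT.eventually (lt_mem_nhds ha'.2)] with i hi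
    rw [indicator_of_mem (show a ∈ Ioc p (T i) from ⟨ha.1, hi.le⟩)]

end Oint

section Calculus

variable {f : ℝ → ℝ} {a b : ℝ}

theorem integral_integral_right_eq_integral_sub_mul (hf : Continuous f) :
    ∫ y in a..b, (∫ x in y..b, f x) = ∫ x in a..b, (x - a) * f x := by
  have hu : ∀ y ∈ uIcc a b, HasDerivAt (fun y => ∫ x in y..b, f x) (-f y) y := fun y _ =>
    intervalIntegral.integral_hasDerivAt_left (hf.intervalIntegrable _ _)
      hf.aestronglyMeasurable.stronglyMeasurableAtFilter hf.continuousAt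
  have hv : ∀ y ∈ uIcc a b, HasDerivAt (fun y => y - a) 1 y := fun y _ =>
    (hasDerivAt_id y).sub_const a
  have := intervalIntegral.integral_mul_deriv_eq_deriv_mul hu hv
    (hf.neg.intervalIntegrable _ _) (continuous_const.intervalIntegrable _ _)
  simp only [mul_one, intervalIntegral.integral_same, sub_self, mul_zero, zero_mul] at this
  rw [this, zero_sub, ← intervalIntegral.integral_neg]
  congr 1 with x
  ring

theorem integral_mul_integral_add_mul (hf : Continuous f) :
    ∫ z in a..b, f z * ∫ x in a..b, (x + z) * f x =
      2 * (∫ x in a..b, f x) * ∫ x in a..b, x * f x := by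
  have hinner : ∀ z, ∫ x in a..b, (x + z) * f x =
      (∫ x in a..b, x * f x) + z * ∫ x in a..b, f x := fun z => by
    simp only [add_mul, ← intervalIntegral.integral_const_mul]
    exact intervalIntegral.integral_add ((continuous_id.mul hf).intervalIntegrable _ _)
      ((continuous_const.mul hf).intervalIntegrable _ _)
  set m := ∫ x in a..b, f x
  set K := ∫ x in a..b, x * f x
  calc ∫ z in a..b, f z * ∫ x in a..b, (x + z) * f x
      = ∫ z in a..b, (f z * K + z * f z * m) := by
        congr 1 with z
        rw [hinner]
        ring
    _ = m * K + K * m := by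
        rw [intervalIntegral.integral_add
          ((by fun_prop : Continuous fun z => f z * K).intervalIntegrable _ _)
          ((by fun_prop : Continuous fun z => z * f z * m).intervalIntegrable _ _),
          intervalIntegral.integral_mul_const, intervalIntegral.integral_mul_const]
    _ = 2 * m * K := by ring

end Calculus

theorem oint_oint_max_eq {f : ℝ → ℝ} (hf : Continuous f) {b d z : ℝ} (hzb : -z ≤ b)
    (hbd : b ≤ d) :
    oint (-z) d (fun y => oint (max b y) d f) = ∫ x in b..d, (x + z) * f x := by
  have hcont : Continuous fun y => oint (max b y) d f :=
    continuous_oint (continuous_const.max continuous_id) continuous_const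
      (hf.comp continuous_snd)
  have hleft : ∫ y in -z..b, oint (max b y) d f = (b + z) * ∫ x in b..d, f x := by
    rw [intervalIntegral.integral_congr (g := fun _ => oint b d f) fun y hy => by
        rw [uIcc_of_le hzb] at hy
        simp only [max_eq_left hy.2],
      intervalIntegral.integral_const, oint_of_le hbd, smul_eq_mul, sub_neg_eq_add]
  have hright : ∫ y in b..d, oint (max b y) d f = ∫ x in b..d, (x - b) * f x := by
    rw [intervalIntegral.integral_congr (g := fun y => ∫ x in y..d, f x) fun y hy => by
        rw [uIcc_of_le hbd] at hy
        simp only [max_eq_right hy.1, oint_of_le hy.2],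
      integral_integral_right_eq_integral_sub_mul hf]
  rw [oint_of_le (hzb.trans hbd), ← intervalIntegral.integral_add_adjacent_intervals
    (hcont.intervalIntegrable _ _) (hcont.intervalIntegrable _ _), hleft, hright,
    ← intervalIntegral.integral_const_mul, ← intervalIntegral.integral_add
      ((by fun_prop : Continuous fun x => (b + z) * f x).intervalIntegrable _ _)
      ((by fun_prop : Continuous fun x => (x - b) * f x).intervalIntegrable _ _)]
  congr 1 with x
  ring

section Phi

@[fun_prop]
theorem continuous_phi : Continuous phi := by
  unfold phi
  fun_prop

theorem abs_phi_le_one (x : ℝ) : |phi x| ≤ 1 := by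
  rw [phi, abs_of_pos (Real.exp_pos _), Real.exp_le_one_iff, neg_nonpos]
  positivity

theorem hasDerivAt_phi (x : ℝ) : HasDerivAt phi (-x * phi x) x := by
  have h : HasDerivAt (fun x : ℝ => -(x ^ 2 / 2)) (-x) x :=
    ((hasDerivAt_pow 2 x).div_const 2).fun_neg.congr_deriv (by norm_num)
  exact h.exp.congr_deriv (by rw [phi]; ring)

theorem integral_mul_phi (b d : ℝ) : ∫ x in b..d, x * phi x = phi b - phi d := by
  rw [intervalIntegral.integral_eq_sub_of_hasDerivAt (f := fun x => -phi x)
    (fun x _ => by simpa using (hasDerivAt_phi x).fun_neg)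
    ((by fun_prop : Continuous fun x => x * phi x).intervalIntegrable _ _)]
  ring

theorem oint_phi_mul_oint_oint_max {b d : ℝ} (hb : 0 ≤ b) (hbd : b ≤ d) :
    oint b d (fun z => phi z * oint (-z) d (fun y => oint (max b y) d phi)) =
      2 * (∫ x in b..d, phi x) * (phi b - phi d) := by
  rw [oint_of_le hbd, ← integral_mul_phi, ← integral_mul_integral_add_mul continuous_phi]
  refine intervalIntegral.integral_congr fun z hz => ?_
  rw [uIcc_of_le hbd] at hz
  simp only [oint_oint_max_eq continuous_phi (by linarith [hz.1] : -z ≤ b) hbd]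

end Phi

section TripleIntegral

/-- The integrand of `G(λ)` in the variable `α₁ = a`, with `s = √λ`. -/
noncomputable def gIntegrand (b d s a : ℝ) : ℝ :=
  oint b (min d (s * (1 - a))) (fun z => phi z *
    oint (-z) (min d (s * a)) (fun y => oint (max b y) (min d (y + s * (1 - a))) phi))

theorem continuous_gIntegrand (b d s : ℝ) : Continuous (gIntegrand b d s) := by
  refine continuous_oint continuous_const (by fun_prop)
    ((continuous_phi.comp continuous_snd).fun_mul ?_)
  refine continuous_oint (by fun_prop) (by fun_prop) ?_
  exact continuous_oint (by fun_prop) (by fun_prop) (continuous_phi.comp continuous_snd)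

variable {b d : ℝ}

theorem abs_gIntegrand_le (hb : 0 ≤ b) (hbd : b ≤ d) (s a : ℝ) :
    |gIntegrand b d s a| ≤ (d - b) * (2 * d) * (d - b) := by
  have hinner : ∀ y, |oint (max b y) (min d (y + s * (1 - a))) phi| ≤ d - b := fun y => by
    simpa only [one_mul] using abs_oint_le (fun x _ => abs_phi_le_one x) zero_le_one
      (by linarith) (by linarith [le_max_left b y, min_le_left d (y + s * (1 - a))])
  have hdb : 0 ≤ d - b := by linarith
  refine abs_oint_le (fun z hz => ?_) (mul_nonneg hdb (by linarith)) hdb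
    (by linarith [min_le_left d (s * (1 - a))])
  rw [abs_mul, ← one_mul ((d - b) * (2 * d))]
  refine mul_le_mul (abs_phi_le_one z) ?_ (abs_nonneg _) zero_le_one
  refine abs_oint_le (fun y _ => hinner y) (by linarith) (by linarith)
    (by linarith [min_le_left d (s * a), hz.2.trans (min_le_left _ _)])

theorem gIntegrand_eq (hd : 0 ≤ d) {s a : ℝ} (ha : d ≤ s * a) (ha' : 2 * d ≤ s * (1 - a)) :
    gIntegrand b d s a =
      oint b d (fun z => phi z * oint (-z) d (fun y => oint (max b y) d phi)) := by
  rw [gIntegrand, min_eq_left (by linarith), min_eq_left ha]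
  refine setIntegral_congr_fun measurableSet_Ioc fun z hz => ?_
  refine congrArg (phi z * ·) (setIntegral_congr_fun measurableSet_Ioc fun y hy => ?_)
  simp only [min_eq_left (by linarith [hy.1, hz.2] : d ≤ y + s * (1 - a))]

theorem tendsto_oint_gIntegrand (hb : 0 ≤ b) (hbd : b ≤ d) :
    Tendsto (fun s => oint 0 (1 - b / s) (gIntegrand b d s)) atTop
      (𝓝 (oint b d (fun z => phi z * oint (-z) d (fun y => oint (max b y) d phi)))) := by
  set L := oint b d (fun z => phi z * oint (-z) d (fun y => oint (max b y) d phi))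
  have hL : oint 0 1 (fun _ => L) = L := by
    simp [oint, Real.volume_real_Ioc]
  rw [← hL]
  refine tendsto_oint_of_dominated
    (Eventually.of_forall fun s => (continuous_gIntegrand b d s).aestronglyMeasurable)
    (Eventually.of_forall fun s a _ => abs_gIntegrand_le hb hbd s a) ?_ ?_ fun a ha => ?_
  · simpa using tendsto_const_nhds.sub (tendsto_const_nhds (x := b).div_atTop tendsto_id)
  · filter_upwards [eventually_gt_atTop 0] with s hs
    linarith [div_nonneg hb hs.le]
  · refine tendsto_const_nhds.congr' ?_
    filter_upwards [(tendsto_id.atTop_mul_const ha.1).eventually_ge_atTop d,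
      (tendsto_id.atTop_mul_const (sub_pos.2 ha.2)).eventually_ge_atTop (2 * d)] with s h h'
    exact (gIntegrand_eq (hb.trans hbd) h h').symm

end TripleIntegral

/-- asymptotics of the triple integral `G(λ)`. -/
theorem triple_integral_limit_G (b d : ℝ) (hb : 0 ≤ b) (hbd : b < d) :
    Tendsto (fun lam : ℝ =>
        oint 0 (1 - b / Real.sqrt lam) (fun a1 =>
          oint b (min d (Real.sqrt lam * (1 - a1))) (fun z => phi z *
            oint (-z) (min d (Real.sqrt lam * a1)) (fun y =>
              oint (max b y) (min d (y + Real.sqrt lam * (1 - a1))) phi))))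
      atTop
      (nhds (2 * (∫ x in b..d, phi x) * (phi b - phi d))) := by
  rw [← oint_phi_mul_oint_oint_max hb hbd.le]
  exact (tendsto_oint_gIntegrand hb hbd.le).comp Real.tendsto_sqrt_atTop
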